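/- The function x ↦ (1 − Φ(x))/φ(x) (the reciprocal of the Mills ratio hazard function) is strictly decreasing on [0, ∞). -/

import Mathlib

open Real MeasureTheory

/-- standard normal density -/
noncomputable def stdPhi (t : ℝ) : ℝ := (Real.sqrt (2 * Real.pi))⁻¹ * Real.exp (-t ^ 2 / 2)

/-- standard normal cumulative distribution function -/
noncomputable def stdCDF (x : ℝ) : ℝ := ∫ t in Set.Iic x, stdPhi t

/-!
Write `R = (1 - Φ)/φ`. Since `Φ' = φ` and `φ'(x) = -x φ(x)`, the quotient rule gives
`R'(x) = x R(x) - 1`. Because `(t φ(t))` integrates to `φ(x)` over `(x, ∞)`,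
`x (1 - Φ(x)) = ∫_{t > x} x φ(t) < ∫_{t > x} t φ(t) = φ(x)`, i.e. `x R(x) < 1`, so `R' < 0`
on all of `ℝ`.
-/

open Set Filter Topology

theorem mul_setIntegral_Ioi_lt {f : ℝ → ℝ} {x : ℝ} (hf : IntegrableOn f (Ioi x))
    (hf_mul : IntegrableOn (fun t => t * f t) (Ioi x)) (hf_pos : ∀ t ∈ Ioi x, 0 < f t) :
    x * ∫ t in Ioi x, f t < ∫ t in Ioi x, t * f t := by
  have hpos : ∀ t ∈ Ioi x, 0 < (t - x) * f t := fun t ht =>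
    mul_pos (sub_pos.2 ht) (hf_pos t ht)
  have hint : IntegrableOn (fun t => (t - x) * f t) (Ioi x) :=
    (hf_mul.sub (hf.const_mul x)).congr_fun (fun t _ => by simp only [Pi.sub_apply]; ring)
      measurableSet_Ioi
  have hgap : 0 < ∫ t in Ioi x, (t - x) * f t := by
    rw [setIntegral_pos_iff_support_of_nonneg_ae
      ((ae_restrict_iff' measurableSet_Ioi).2 (ae_of_all _ fun t ht => (hpos t ht).le)) hint,
      inter_eq_right.2 fun t ht => Function.mem_support.2 (hpos t ht).ne']
    simp
  have hsplit : ∫ t in Ioi x, (t - x) * f t =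
      (∫ t in Ioi x, t * f t) - x * ∫ t in Ioi x, f t := by
    rw [← integral_const_mul, ← integral_sub hf_mul (hf.const_mul x)]
    congr 1 with t
    ring
  linarith

theorem stdPhi_eq_gaussianPDFReal : stdPhi = ProbabilityTheory.gaussianPDFReal 0 1 := by
  ext t
  simp [stdPhi, ProbabilityTheory.gaussianPDFReal]

theorem stdPhi_pos (t : ℝ) : 0 < stdPhi t := by
  unfold stdPhi
  positivity

theorem continuous_stdPhi : Continuous stdPhi := by
  unfold stdPhi
  fun_prop

theorem integrable_stdPhi : Integrable stdPhi :=
  stdPhi_eq_gaussianPDFReal ▸ ProbabilityTheory.integrable_gaussianPDFReal 0 1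

theorem integral_stdPhi : ∫ t, stdPhi t = 1 :=
  stdPhi_eq_gaussianPDFReal ▸ ProbabilityTheory.integral_gaussianPDFReal_eq_one 0 one_ne_zero

theorem integrable_id_mul_stdPhi : Integrable fun t => t * stdPhi t := by
  convert (integrable_mul_exp_neg_mul_sq (b := 1 / 2) (by norm_num)).const_mul
    (√(2 * π))⁻¹ using 2 with t
  unfold stdPhi
  ring_nf

theorem hasDerivAt_stdPhi (x : ℝ) : HasDerivAt stdPhi (-x * stdPhi x) x := by
  have h : HasDerivAt (fun t : ℝ => -t ^ 2 / 2) (-x) x :=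
    ((hasDerivAt_pow 2 x).neg.div_const 2).congr_deriv (by ring)
  exact (h.exp.const_mul (√(2 * π))⁻¹).congr_deriv (by unfold stdPhi; ring)

theorem tendsto_stdPhi_atTop : Tendsto stdPhi atTop (𝓝 0) := by
  have h : Tendsto (fun t : ℝ => -t ^ 2 / 2) atTop atBot :=
    (tendsto_neg_atTop_atBot.comp (tendsto_pow_atTop two_ne_zero)).atBot_div_const two_pos
  unfold stdPhi
  simpa only [Function.comp_def, mul_zero] using
    (tendsto_exp_atBot.comp h).const_mul (√(2 * π))⁻¹

theorem setIntegral_Ioi_id_mul_stdPhi (x : ℝ) : ∫ t in Ioi x, t * stdPhi t = stdPhi x := by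
  simpa using integral_Ioi_of_hasDerivAt_of_tendsto' (f := fun t => -stdPhi t)
    (fun t _ => by simpa using (hasDerivAt_stdPhi t).fun_neg)
    integrable_id_mul_stdPhi.integrableOn tendsto_stdPhi_atTop.neg

theorem one_sub_stdCDF (x : ℝ) : 1 - stdCDF x = ∫ t in Ioi x, stdPhi t := by
  have h := integral_add_compl (measurableSet_Iic (a := x)) integrable_stdPhi
  rw [compl_Iic, integral_stdPhi] at h
  rw [stdCDF, ← h, add_sub_cancel_left]

theorem hasDerivAt_stdCDF (x : ℝ) : HasDerivAt stdCDF (stdPhi x) x := by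
  have hCDF : ∀ y, stdCDF y = stdCDF 0 + ∫ t in (0 : ℝ)..y, stdPhi t := fun y => by
    rw [← intervalIntegral.integral_Iic_sub_Iic integrable_stdPhi.integrableOn
      integrable_stdPhi.integrableOn, stdCDF, stdCDF, add_sub_cancel]
  exact ((continuous_stdPhi.integral_hasStrictDerivAt 0 x).hasDerivAt.const_add _)
    |>.congr_of_eventuallyEq (Eventually.of_forall hCDF)

theorem mul_one_sub_stdCDF_lt_stdPhi (x : ℝ) : x * (1 - stdCDF x) < stdPhi x := by
  rw [one_sub_stdCDF, ← setIntegral_Ioi_id_mul_stdPhi]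
  exact mul_setIntegral_Ioi_lt integrable_stdPhi.integrableOn
    integrable_id_mul_stdPhi.integrableOn fun t _ => stdPhi_pos t

theorem hasDerivAt_one_sub_stdCDF_div_stdPhi (x : ℝ) :
    HasDerivAt (fun x => (1 - stdCDF x) / stdPhi x)
      (x * ((1 - stdCDF x) / stdPhi x) - 1) x := by
  have hφ := (stdPhi_pos x).ne'
  refine (((hasDerivAt_stdCDF x).const_sub 1).fun_div (hasDerivAt_stdPhi x) hφ).congr_deriv ?_
  field_simp
  ring

theorem strictAnti_one_sub_stdCDF_div_stdPhi :
    StrictAnti fun x => (1 - stdCDF x) / stdPhi x := by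
  refine strictAnti_of_deriv_neg fun x => ?_
  rw [(hasDerivAt_one_sub_stdCDF_div_stdPhi x).deriv, sub_neg, mul_div_assoc',
    div_lt_one (stdPhi_pos x)]
  exact mul_one_sub_stdCDF_lt_stdPhi x

/-- The reciprocal Mills ratio `x ↦ (1 - Φ(x))/φ(x)` is strictly decreasing on `[0, ∞)`. -/
theorem stmt_10 : StrictAntiOn (fun x => (1 - stdCDF x) / stdPhi x) (Set.Ici (0 : ℝ)) :=
  strictAnti_one_sub_stdCDF_div_stdPhi.strictAntiOn _
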